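/- arXiv:2412.03712 — 2 statements merged into one kernel-verified Lean document; each statement's English description precedes it below -/
import Mathlib

section
/- Let Q be a real (or complex) 3×2 matrix and R a real (or complex) 2×3 matrix, and suppose the 2×2 matrix RQ is diagonalizable with nonzero eigenvalues μ₁ and μ₂. Then the 5×5 block matrix M = [[0, Q], [R, 0]] is diagonalizable and its eigenvalues are exactly 0, √μ₁, −√μ₁, √μ₂, −√μ₂ (with any fixed choice of complex square roots). -/
open Matrix

/-! If `R Q v = μ v` and `r ^ 2 = μ`, then `(Q v, r v)` and `(Q v, -r v)` are eigenvectors of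
`M = [[0, Q], [R, 0]]` for `r` and `-r`; together with `(w, 0)` for `w ∈ ker R` they form an
eigenbasis. In a vanishing combination the lower halves force the coefficients of `(Q v, ± r v)` to
agree; applying `R` to the upper half then kills the `ker R` part and leaves `2 R Q` applied to the
rest, so everything vanishes. For a `2 × 3` matrix `R`, the cross product of its rows lies in
`ker R`, and it is nonzero because by Binet–Cauchy its dot product with the cross product of the
columns of `Q` is `det (R Q) ≠ 0`. -/

section
variable {K k m n : Type*} [Field K] [Fintype k] [Fintype m] [Fintype n]
  [DecidableEq m]

def blockEigenvectors (N : Matrix n k K) (Q : Matrix n m K) (P : Matrix m m K) (r : m → K) :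
    Matrix (n ⊕ m) ((k ⊕ m) ⊕ m) K :=
  fromBlocks (fromCols N (Q * P)) (Q * P) (fromCols 0 (P * diagonal r)) (-(P * diagonal r))

variable {Q : Matrix n m K} {R : Matrix m n K} {N : Matrix n k K} {P : Matrix m m K} {r : m → K}

theorem fromBlocks_mul_blockEigenvectors [DecidableEq k] (hN : R * N = 0)
    (hRQ : R * Q * P = P * diagonal (r ^ 2)) :
    fromBlocks 0 Q R 0 * blockEigenvectors N Q P r =
      blockEigenvectors N Q P r * diagonal (Sum.elim (Sum.elim (0 : k → K) r) (-r)) := by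
  have hRQP : R * (Q * P) = P * diagonal r * diagonal r := by
    rw [← Matrix.mul_assoc, hRQ, Matrix.mul_assoc, diagonal_mul_diagonal, sq]; rfl
  have hD : diagonal (Sum.elim (Sum.elim 0 r) (-r)) =
      fromBlocks (fromBlocks (0 : Matrix k k K) 0 0 (diagonal r)) 0 0 (-diagonal r) := by
    rw [← fromBlocks_diagonal, ← fromBlocks_diagonal, Pi.zero_def, diagonal_zero, diagonal_neg]
    rfl
  rw [hD, blockEigenvectors, fromBlocks_multiply, fromBlocks_multiply, fromCols_mul_fromBlocks,
    fromCols_mul_fromBlocks, mul_fromCols]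
  simp only [mul_fromCols, Matrix.zero_mul, Matrix.mul_zero, zero_add, add_zero, neg_zero, hN,
    fromCols_zero, hRQP, Matrix.mul_neg, Matrix.neg_mul, neg_neg, Matrix.mul_assoc]

theorem isUnit_mul_diagonal (hP : IsUnit P) (hr : ∀ i, r i ≠ 0) : IsUnit (P * diagonal r) :=
  hP.mul (isUnit_diagonal.2 (Pi.isUnit_iff.2 fun i => (hr i).isUnit))

theorem mulVec_injective_blockEigenvectors [NeZero (2 : K)] (hN : Function.Injective N.mulVec)
    (hRN : R * N = 0) (hRQ : R * Q * P = P * diagonal (r ^ 2)) (hP : IsUnit P)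
    (hr : ∀ i, r i ≠ 0) : Function.Injective (blockEigenvectors N Q P r).mulVec := by
  have hPr := mulVec_injective_iff_isUnit.2 (isUnit_mul_diagonal hP hr)
  have hPr2 := mulVec_injective_iff_isUnit.2
    (isUnit_mul_diagonal (r := r ^ 2) hP fun i => pow_ne_zero 2 (hr i))
  refine (injective_iff_map_eq_zero (blockEigenvectors N Q P r).mulVecLin).2 fun v hv => ?_
  obtain ⟨x, c, rfl⟩ : ∃ x c, v = Sum.elim x c := ⟨_, _, (Sum.elim_comp_inl_inr v).symm⟩
  obtain ⟨a, b, rfl⟩ : ∃ a b, x = Sum.elim a b := ⟨_, _, (Sum.elim_comp_inl_inr x).symm⟩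
  simp only [mulVecLin_apply, blockEigenvectors, fromBlocks_mulVec, fromCols_mulVec,
    Sum.elim_comp_inl, Sum.elim_comp_inr, zero_mulVec, zero_add, neg_mulVec] at hv
  rw [← Sum.elim_zero_zero, Sum.elim_eq_iff] at hv
  obtain ⟨htop, hbot⟩ := hv
  obtain rfl : b = c := hPr (add_neg_eq_zero.1 hbot)
  have hb : b = 0 := by
    have h := congrArg (R *ᵥ ·) htop
    simp only [mulVec_add, mulVec_mulVec, ← Matrix.mul_assoc, hRN, hRQ, zero_mulVec, zero_add,
      mulVec_zero] at h
    rw [← two_smul K, smul_eq_zero] at h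
    exact hPr2 ((h.resolve_left two_ne_zero).trans (mulVec_zero _).symm)
  subst hb
  have ha : a = 0 := hN (by simpa using htop)
  simp [ha]

theorem exists_isUnit_det_and_eq_mul_diagonal_mul_inv {ι : Type*} [Fintype ι] [DecidableEq ι]
    [DecidableEq n] {A : Matrix n n K} {S : Matrix n ι K} {d : ι → K} (e : n ≃ ι)
    (hS : Function.Injective S.mulVec) (hAS : A * S = S * diagonal d) :
    ∃ T : Matrix n n K, IsUnit T.det ∧ A = T * diagonal (d ∘ e) * T⁻¹ := by
  set T := S.submatrix id e
  have hT : IsUnit T.det := by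
    rw [← isUnit_iff_isUnit_det, ← mulVec_injective_iff_isUnit]
    intro v w hvw
    simp only [T, submatrix_mulVec_equiv, Function.comp_id] at hvw
    exact e.symm.surjective.injective_comp_right (hS hvw)
  have hAT : A * T = T * diagonal (d ∘ e) := by
    rw [← submatrix_diagonal_equiv, submatrix_mul_equiv, ← hAS]
    rfl
  exact ⟨T, hT, by rw [← hAT, mul_nonsing_inv_cancel_right _ _ hT]⟩

end

section
variable {α : Type*} [CommRing α]

theorem det_mul_eq_cross_dot_cross (R : Matrix (Fin 2) (Fin 3) α)
    (Q : Matrix (Fin 3) (Fin 2) α) :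
    (R * Q).det = R 0 ⨯₃ R 1 ⬝ᵥ Qᵀ 0 ⨯₃ Qᵀ 1 := by
  rw [det_fin_two, cross_dot_cross]
  rfl

theorem mul_replicateCol_cross_eq_zero (R : Matrix (Fin 2) (Fin 3) α) :
    R * replicateCol (Fin 1) (R 0 ⨯₃ R 1) = 0 := by
  rw [← replicateCol_mulVec, ← replicateCol_zero]
  congr 1
  ext i
  fin_cases i <;> simp [mulVec]

end

theorem mulVec_injective_replicateCol {K m : Type*} [Field K] [Fintype m] {v : m → K}
    (hv : v ≠ 0) :
    Function.Injective (replicateCol (Fin 1) v).mulVec := by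
  refine (injective_iff_map_eq_zero (replicateCol (Fin 1) v).mulVecLin).2 fun a ha => ?_
  have : a 0 • v = 0 := by
    rw [← ha]; ext i; simp [mulVec, dotProduct, mul_comm]
  ext i
  rw [Subsingleton.elim i 0]
  exact (smul_eq_zero.1 this).resolve_right hv

theorem stmt_0 (Q : Matrix (Fin 3) (Fin 2) ℂ) (R : Matrix (Fin 2) (Fin 3) ℂ)
    (μ₁ μ₂ r₁ r₂ : ℂ) (hr₁ : r₁ ^ 2 = μ₁) (hr₂ : r₂ ^ 2 = μ₂)
    (hμ₁ : μ₁ ≠ 0) (hμ₂ : μ₂ ≠ 0)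
    (hdiag : ∃ P : Matrix (Fin 2) (Fin 2) ℂ, IsUnit P.det ∧
      R * Q = P * Matrix.diagonal ![μ₁, μ₂] * P⁻¹) :
    ∃ (S : Matrix (Fin 3 ⊕ Fin 2) (Fin 3 ⊕ Fin 2) ℂ) (dv : Fin 3 ⊕ Fin 2 → ℂ),
      IsUnit S.det ∧
      Matrix.fromBlocks 0 Q R 0 = S * Matrix.diagonal dv * S⁻¹ ∧
      (Finset.univ.val.map dv) = ({0, r₁, -r₁, r₂, -r₂} : Multiset ℂ) := by
  obtain ⟨P, hP, hRQ⟩ := hdiag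
  have hPu : IsUnit P := (isUnit_iff_isUnit_det P).2 hP
  set r : Fin 2 → ℂ := ![r₁, r₂]
  have hr2 : r ^ 2 = ![μ₁, μ₂] := by ext i; fin_cases i <;> simp [r, hr₁, hr₂]
  have hr : ∀ i, r i ≠ 0 := fun i =>
    ne_zero_pow two_ne_zero (by rw [← Pi.pow_apply, hr2]; fin_cases i <;> simpa)
  have hRQP : R * Q * P = P * diagonal (r ^ 2) := by
    rw [hRQ, hr2, nonsing_inv_mul_cancel_right _ _ hP]
  have hdet : (R * Q).det ≠ 0 := by
    rw [hRQ, det_conj hPu, det_diagonal, Fin.prod_univ_two]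
    exact mul_ne_zero hμ₁ hμ₂
  have hcross : R 0 ⨯₃ R 1 ≠ 0 := fun h =>
    hdet (by rw [det_mul_eq_cross_dot_cross, h, zero_dotProduct])
  have hker := mul_replicateCol_cross_eq_zero R
  obtain ⟨S, hS, hM⟩ := exists_isUnit_det_and_eq_mul_diagonal_mul_inv
    ((finSumFinEquiv (m := 1) (n := 2)).symm.sumCongr (Equiv.refl (Fin 2)))
    (mulVec_injective_blockEigenvectors (mulVec_injective_replicateCol hcross) hker hRQP hPu hr)
    (fromBlocks_mul_blockEigenvectors hker hRQP)
  refine ⟨S, _, hS, hM, ?_⟩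
  show ({0, r₁, r₂, -r₁, -r₂} : Multiset ℂ) = _
  simp only [Multiset.insert_eq_cons, Multiset.cons_swap r₂ (-r₁)]
end

section
/- Let H₀, H₁ > 0, k ≠ 0 real, and let c₁, c₂, c₃, d₀, d₁ be reals such that d₀, d₁, c₁, c₂, c₃ > 0, B₁ := (H₀+H₁)c₃ − c₂ > 0, B₂ := H₀H₁c₂ − (H₀+H₁)c₁ > 0, B₃ := (H₀+H₁)d₁ − d₀ > 0, D₁ := c₂B₁ − (H₀+H₁)B₃ > 0, D₂ := c₁B₂ − d₀(H₀H₁)² > 0, D₃ := c₃B₁B₃ − B₃² − d₁B₁² > 0, and D₄ := (c₁c₂ − 2d₀H₀H₁)B₁ + (c₂H₀H₁ − 2c₁(H₀+H₁))B₃ > 0. Then, for the quintic s⁵ + a₁s⁴ + a₂s³ + a₃s² + a₄s + a₅ with a₁ = H₀+H₁, a₂ = H₀H₁ + c₃k², a₃ = c₂k², a₄ = c₁k² + d₁k⁴, a₅ = d₀k⁴, all the Hurwitz conditions hold: aᵢ > 0 for i = 1,…,5, a₁a₂ − a₃ > 0, a₃(a₁a₂−a₃) − a₁(a₁a₄−a₅)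 > 0, and a₄[a₃(a₁a₂−a₃) − a₁(a₁a₄−a₅)] − a₅(a₁a₂² + a₅ − a₂a₃ − a₁a₄) > 0. -/
/-!
Writing `K = k²`, the Hurwitz determinants of the quintic are polynomials in `K` whose
coefficients are exactly the given combinations:
`Δ₂ = (H₀+H₁)H₀H₁ + K B₁`, `Δ₃ = K (H₀+H₁) B₂ + K² D₁` and
`Δ₄ = K² (H₀+H₁) D₂ + K³ D₄ + K⁴ D₃`. Hence all of them are positive for `K > 0`.
-/

section Hurwitz

variable {R : Type*} [CommRing R]

/-- `hurwitzDet₂`, `hurwitzDet₃`, `hurwitzDet₄` are `det H₂`, `det H₃`, `det H₄` for the quintic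
`s⁵ + a₁s⁴ + a₂s³ + a₃s² + a₄s + a₅`. -/
def hurwitzDet₂ (a₁ a₂ a₃ : R) : R := a₁ * a₂ - a₃

def hurwitzDet₃ (a₁ a₂ a₃ a₄ a₅ : R) : R := a₃ * hurwitzDet₂ a₁ a₂ a₃ - a₁ * (a₁ * a₄ - a₅)

def hurwitzDet₄ (a₁ a₂ a₃ a₄ a₅ : R) : R :=
  a₄ * hurwitzDet₃ a₁ a₂ a₃ a₄ a₅ - a₅ * (a₁ * a₂ ^ 2 + a₅ - a₂ * a₃ - a₁ * a₄)

variable (H₀ H₁ k c₁ c₂ c₃ d₀ d₁ : R)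

theorem hurwitzDet₂_dispersion :
    hurwitzDet₂ (H₀ + H₁) (H₀ * H₁ + c₃ * k ^ 2) (c₂ * k ^ 2)
      = (H₀ + H₁) * (H₀ * H₁) + k ^ 2 * ((H₀ + H₁) * c₃ - c₂) := by
  unfold hurwitzDet₂; ring

theorem hurwitzDet₃_dispersion :
    hurwitzDet₃ (H₀ + H₁) (H₀ * H₁ + c₃ * k ^ 2) (c₂ * k ^ 2) (c₁ * k ^ 2 + d₁ * k ^ 4) (d₀ * k ^ 4)
      = k ^ 2 * ((H₀ + H₁) * (H₀ * H₁ * c₂ - (H₀ + H₁) * c₁))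
        + k ^ 4 * (c₂ * ((H₀ + H₁) * c₃ - c₂) - (H₀ + H₁) * ((H₀ + H₁) * d₁ - d₀)) := by
  unfold hurwitzDet₃ hurwitzDet₂; ring

theorem hurwitzDet₄_dispersion :
    hurwitzDet₄ (H₀ + H₁) (H₀ * H₁ + c₃ * k ^ 2) (c₂ * k ^ 2) (c₁ * k ^ 2 + d₁ * k ^ 4) (d₀ * k ^ 4)
      = k ^ 4 * ((H₀ + H₁) * (c₁ * (H₀ * H₁ * c₂ - (H₀ + H₁) * c₁) - d₀ * (H₀ * H₁) ^ 2))
        + k ^ 6 * ((c₁ * c₂ - 2 * d₀ * H₀ * H₁) * ((H₀ + H₁) * c₃ - c₂)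
            + (c₂ * H₀ * H₁ - 2 * c₁ * (H₀ + H₁)) * ((H₀ + H₁) * d₁ - d₀))
        + k ^ 8 * (c₃ * ((H₀ + H₁) * c₃ - c₂) * ((H₀ + H₁) * d₁ - d₀)
            - ((H₀ + H₁) * d₁ - d₀) ^ 2 - d₁ * ((H₀ + H₁) * c₃ - c₂) ^ 2) := by
  unfold hurwitzDet₄ hurwitzDet₃ hurwitzDet₂; ring

end Hurwitz

theorem stmt_19_general (H₀ H₁ k c₁ c₂ c₃ d₀ d₁ : ℝ)
    (hH₀ : 0 < H₀) (hH₁ : 0 < H₁) (hk : k ≠ 0)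
    (hd₀ : 0 < d₀) (hd₁ : 0 < d₁) (hc₁ : 0 < c₁) (hc₂ : 0 < c₂) (hc₃ : 0 < c₃)
    (hB₁ : 0 < (H₀ + H₁) * c₃ - c₂)
    (hB₂ : 0 < H₀ * H₁ * c₂ - (H₀ + H₁) * c₁)
    (hD₁ : 0 < c₂ * ((H₀ + H₁) * c₃ - c₂) - (H₀ + H₁) * ((H₀ + H₁) * d₁ - d₀))
    (hD₂ : 0 < c₁ * (H₀ * H₁ * c₂ - (H₀ + H₁) * c₁) - d₀ * (H₀ * H₁) ^ 2)
    (hD₃ : 0 < c₃ * ((H₀ + H₁) * c₃ - c₂) * ((H₀ + H₁) * d₁ - d₀)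
              - ((H₀ + H₁) * d₁ - d₀) ^ 2 - d₁ * ((H₀ + H₁) * c₃ - c₂) ^ 2)
    (hD₄ : 0 < (c₁ * c₂ - 2 * d₀ * H₀ * H₁) * ((H₀ + H₁) * c₃ - c₂)
              + (c₂ * H₀ * H₁ - 2 * c₁ * (H₀ + H₁)) * ((H₀ + H₁) * d₁ - d₀))
    (a₁ a₂ a₃ a₄ a₅ : ℝ)
    (ha₁ : a₁ = H₀ + H₁) (ha₂ : a₂ = H₀ * H₁ + c₃ * k ^ 2) (ha₃ : a₃ = c₂ * k ^ 2)
    (ha₄ : a₄ = c₁ * k ^ 2 + d₁ * k ^ 4) (ha₅ : a₅ = d₀ * k ^ 4) :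
    (0 < a₁ ∧ 0 < a₂ ∧ 0 < a₃ ∧ 0 < a₄ ∧ 0 < a₅) ∧
    0 < a₁ * a₂ - a₃ ∧
    0 < a₃ * (a₁ * a₂ - a₃) - a₁ * (a₁ * a₄ - a₅) ∧
    0 < a₄ * (a₃ * (a₁ * a₂ - a₃) - a₁ * (a₁ * a₄ - a₅))
        - a₅ * (a₁ * a₂ ^ 2 + a₅ - a₂ * a₃ - a₁ * a₄) := by
  subst ha₁ ha₂ ha₃ ha₄ ha₅
  have hH : 0 < H₀ + H₁ := by positivity
  have hk₂ : 0 < k ^ 2 := by positivity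
  have hk₄ : 0 < k ^ 4 := by positivity
  refine ⟨⟨by positivity, by positivity, by positivity, by positivity, by positivity⟩, ?_, ?_, ?_⟩
  · change 0 < hurwitzDet₂ _ _ _
    rw [hurwitzDet₂_dispersion]
    exact add_pos (by positivity) (mul_pos hk₂ hB₁)
  · change 0 < hurwitzDet₃ _ _ _ _ _
    rw [hurwitzDet₃_dispersion]
    exact add_pos (mul_pos hk₂ (mul_pos hH hB₂)) (mul_pos hk₄ hD₁)
  · change 0 < hurwitzDet₄ _ _ _ _ _
    rw [hurwitzDet₄_dispersion]
    exact add_pos (add_pos (mul_pos hk₄ (mul_pos hH hD₂)) (mul_pos (by positivity) hD₄))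
      (mul_pos (by positivity) hD₃)

theorem stmt_19 (H₀ H₁ k c₁ c₂ c₃ d₀ d₁ : ℝ)
    (hH₀ : 0 < H₀) (hH₁ : 0 < H₁) (hk : k ≠ 0)
    (hd₀ : 0 < d₀) (hd₁ : 0 < d₁) (hc₁ : 0 < c₁) (hc₂ : 0 < c₂) (hc₃ : 0 < c₃)
    (hB₁ : 0 < (H₀ + H₁) * c₃ - c₂)
    (hB₂ : 0 < H₀ * H₁ * c₂ - (H₀ + H₁) * c₁)
    (hB₃ : 0 < (H₀ + H₁) * d₁ - d₀)
    (hD₁ : 0 < c₂ * ((H₀ + H₁) * c₃ - c₂) - (H₀ + H₁) * ((H₀ + H₁) * d₁ - d₀))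
    (hD₂ : 0 < c₁ * (H₀ * H₁ * c₂ - (H₀ + H₁) * c₁) - d₀ * (H₀ * H₁) ^ 2)
    (hD₃ : 0 < c₃ * ((H₀ + H₁) * c₃ - c₂) * ((H₀ + H₁) * d₁ - d₀)
              - ((H₀ + H₁) * d₁ - d₀) ^ 2 - d₁ * ((H₀ + H₁) * c₃ - c₂) ^ 2)
    (hD₄ : 0 < (c₁ * c₂ - 2 * d₀ * H₀ * H₁) * ((H₀ + H₁) * c₃ - c₂)
              + (c₂ * H₀ * H₁ - 2 * c₁ * (H₀ + H₁)) * ((H₀ + H₁) * d₁ - d₀))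
    (a₁ a₂ a₃ a₄ a₅ : ℝ)
    (ha₁ : a₁ = H₀ + H₁) (ha₂ : a₂ = H₀ * H₁ + c₃ * k ^ 2) (ha₃ : a₃ = c₂ * k ^ 2)
    (ha₄ : a₄ = c₁ * k ^ 2 + d₁ * k ^ 4) (ha₅ : a₅ = d₀ * k ^ 4) :
    (0 < a₁ ∧ 0 < a₂ ∧ 0 < a₃ ∧ 0 < a₄ ∧ 0 < a₅) ∧
    0 < a₁ * a₂ - a₃ ∧
    0 < a₃ * (a₁ * a₂ - a₃) - a₁ * (a₁ * a₄ - a₅) ∧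
    0 < a₄ * (a₃ * (a₁ * a₂ - a₃) - a₁ * (a₁ * a₄ - a₅))
        - a₅ * (a₁ * a₂ ^ 2 + a₅ - a₂ * a₃ - a₁ * a₄) :=
  stmt_19_general H₀ H₁ k c₁ c₂ c₃ d₀ d₁ hH₀ hH₁ hk hd₀ hd₁ hc₁ hc₂ hc₃ hB₁ hB₂ hD₁ hD₂ hD₃ hD₄ a₁
    a₂ a₃ a₄ a₅ ha₁ ha₂ ha₃ ha₄ ha₅
end
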